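/- arXiv:1906.09134 — 2 statements merged into one kernel-verified Lean document; each statement's English description precedes it below -/
import Mathlib

section
/- Let t₁ < t₂, c₁ > 0, c₂ ≥ 0, and let u⁽¹⁾, u⁽²⁾ ∈ ℝᵐ with ‖u⁽²⁾‖_R > ‖u⁽¹⁾‖_R, where ‖u‖²_R = uᵀRu for a symmetric positive definite matrix R, and let |||·||| be any norm on ℝᵐ. For α ∈ (0,1) sufficiently close to 1, define β by β = t₁/(t₁ − (1−α)t₂) (equivalently β − 1 = (1−α)(t₂−t₁)/(t₁−(1−α)t₂)). Then (t₁/β)(β²c₁‖u⁽¹⁾‖²_R + βc₂|||u⁽¹⁾|||) + ((t₂−t₁)/α)(α²c₁‖u⁽²⁾‖²_R + αc₂|||u⁽²⁾|||) < t₁(c₁‖u⁽¹⁾‖²_R + c₂|||u⁽¹⁾|||) + (t₂−t₁)(c₁‖u⁽²⁾‖²_R + c₂|||u⁽²⁾|||). -/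
/-!
Writing `d = t₁ - (1 - α) t₂`, the speed-up factor is `β = α t₁ / d`. The `|||·|||` terms scale
linearly in the speed, so they cancel exactly, and the difference of the two costs is
`c₁ (1 - α) (t₂ - t₁) (t₁ ‖u⁽¹⁾‖²_R - d ‖u⁽²⁾‖²_R) / d`. At `α = 1` the last factor of the
numerator is `t₁ (‖u⁽¹⁾‖²_R - ‖u⁽²⁾‖²_R) < 0` and `d = t₁ > 0`, so by continuity the difference
is negative for all `α < 1` close enough to `1`.
-/

open Matrix

open Set Filter Topology

theorem Filter.Eventually.exists_Ioo_forall_of_nhdsLT {α : Type*} [LinearOrder α]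
    [TopologicalSpace α] [OrderTopology α] [DenselyOrdered α] {p : α → Prop} {a b : α}
    (h : ∀ᶠ x in 𝓝[<] b, p x) (hab : a < b) : ∃ x₀ ∈ Ioo a b, ∀ x ∈ Ioo x₀ b, p x := by
  obtain ⟨l, hl, hsub⟩ := (mem_nhdsLT_iff_exists_mem_Ico_Ioo_subset hab).1 h
  obtain ⟨x₀, hlx₀, hx₀b⟩ := exists_between hl.2
  exact ⟨x₀, ⟨hl.1.trans_lt hlx₀, hx₀b⟩, fun x hx => hsub ⟨hlx₀.trans hx.1, hx.2⟩⟩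

section CostComparison

variable {t₁ t₂ α c₁ c₂ q₁ q₂ n₁ n₂ : ℝ}

theorem one_add_mul_sub_div_eq (hd : t₁ - (1 - α) * t₂ ≠ 0) :
    1 + (1 - α) * (t₂ - t₁) / (t₁ - (1 - α) * t₂) = α * t₁ / (t₁ - (1 - α) * t₂) := by
  field_simp
  ring

theorem div_mul_scaled_cost {t s : ℝ} (hs : s ≠ 0) :
    t / s * (s ^ 2 * c₁ * q₁ + s * c₂ * n₁) = s * (t * c₁ * q₁) + t * (c₂ * n₁) := by
  field_simp

theorem scaled_costs_sub_costs (ht₁ : t₁ ≠ 0) (hα : α ≠ 0) (hd : t₁ - (1 - α) * t₂ ≠ 0) :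
    (t₁ / (1 + (1 - α) * (t₂ - t₁) / (t₁ - (1 - α) * t₂))) *
          ((1 + (1 - α) * (t₂ - t₁) / (t₁ - (1 - α) * t₂)) ^ 2 * c₁ * q₁ +
            (1 + (1 - α) * (t₂ - t₁) / (t₁ - (1 - α) * t₂)) * c₂ * n₁) +
        ((t₂ - t₁) / α) * (α ^ 2 * c₁ * q₂ + α * c₂ * n₂) -
      (t₁ * (c₁ * q₁ + c₂ * n₁) + (t₂ - t₁) * (c₁ * q₂ + c₂ * n₂)) =
      c₁ * (1 - α) * (t₂ - t₁) * (t₁ * q₁ - (t₁ - (1 - α) * t₂) * q₂) /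
        (t₁ - (1 - α) * t₂) := by
  rw [one_add_mul_sub_div_eq hd, div_mul_scaled_cost (div_ne_zero (mul_ne_zero hα ht₁) hd),
    div_mul_scaled_cost hα]
  field_simp
  ring

theorem scaled_costs_lt_costs (ht₁ : 0 < t₁) (ht : t₁ < t₂) (hc₁ : 0 < c₁) (hα₀ : 0 < α)
    (hα₁ : α < 1) (hd : 0 < t₁ - (1 - α) * t₂) (hq : t₁ * q₁ < (t₁ - (1 - α) * t₂) * q₂) :
    (t₁ / (1 + (1 - α) * (t₂ - t₁) / (t₁ - (1 - α) * t₂))) *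
          ((1 + (1 - α) * (t₂ - t₁) / (t₁ - (1 - α) * t₂)) ^ 2 * c₁ * q₁ +
            (1 + (1 - α) * (t₂ - t₁) / (t₁ - (1 - α) * t₂)) * c₂ * n₁) +
        ((t₂ - t₁) / α) * (α ^ 2 * c₁ * q₂ + α * c₂ * n₂) <
      t₁ * (c₁ * q₁ + c₂ * n₁) + (t₂ - t₁) * (c₁ * q₂ + c₂ * n₂) := by
  rw [← sub_neg, scaled_costs_sub_costs ht₁.ne' hα₀.ne' hd.ne']
  have hcoef : 0 < c₁ * (1 - α) * (t₂ - t₁) :=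
    mul_pos (mul_pos hc₁ (sub_pos.2 hα₁)) (sub_pos.2 ht)
  exact div_neg_of_neg_of_pos (mul_neg_of_pos_of_neg hcoef (sub_neg.2 hq)) hd

theorem eventually_mul_lt_sub_mul (ht₁ : 0 < t₁) (hq : q₁ < q₂) :
    ∀ᶠ α in 𝓝 (1 : ℝ),
      0 < α ∧ 0 < t₁ - (1 - α) * t₂ ∧ t₁ * q₁ < (t₁ - (1 - α) * t₂) * q₂ := by
  have hd : ∀ᶠ α in 𝓝 (1 : ℝ), (0 : ℝ) < t₁ - (1 - α) * t₂ :=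
    ContinuousAt.eventually_lt (f := fun _ => 0) (by fun_prop) (by fun_prop) (by simpa using ht₁)
  have hq' : ∀ᶠ α in 𝓝 (1 : ℝ), t₁ * q₁ < (t₁ - (1 - α) * t₂) * q₂ :=
    ContinuousAt.eventually_lt (by fun_prop) (by fun_prop)
      (by simpa using mul_lt_mul_of_pos_left hq ht₁)
  exact (lt_mem_nhds one_pos).and (hd.and hq')

end CostComparison

theorem stmt_10_general {m : ℕ} (t₁ t₂ c₁ c₂ : ℝ) (ht₁ : 0 < t₁) (ht : t₁ < t₂)
    (hc₁ : 0 < c₁)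
    (R : Matrix (Fin m) (Fin m) ℝ)
    (N : (Fin m → ℝ) → ℝ)
    (u₁ u₂ : Fin m → ℝ)
    (hu : u₁ ⬝ᵥ R.mulVec u₁ < u₂ ⬝ᵥ R.mulVec u₂) :
    ∃ α₀ ∈ Set.Ioo (0 : ℝ) 1, ∀ α ∈ Set.Ioo α₀ 1,
      (t₁ / (1 + (1 - α) * (t₂ - t₁) / (t₁ - (1 - α) * t₂))) *
          ((1 + (1 - α) * (t₂ - t₁) / (t₁ - (1 - α) * t₂)) ^ 2 * c₁ * (u₁ ⬝ᵥ R.mulVec u₁) +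
            (1 + (1 - α) * (t₂ - t₁) / (t₁ - (1 - α) * t₂)) * c₂ * N u₁) +
        ((t₂ - t₁) / α) * (α ^ 2 * c₁ * (u₂ ⬝ᵥ R.mulVec u₂) + α * c₂ * N u₂) <
      t₁ * (c₁ * (u₁ ⬝ᵥ R.mulVec u₁) + c₂ * N u₁) +
        (t₂ - t₁) * (c₁ * (u₂ ⬝ᵥ R.mulVec u₂) + c₂ * N u₂) := by
  obtain ⟨α₀, hα₀, hnear⟩ :=
    ((eventually_mul_lt_sub_mul (t₂ := t₂) ht₁ hu).filter_mono
      nhdsWithin_le_nhds).exists_Ioo_forall_of_nhdsLT one_pos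
  refine ⟨α₀, hα₀, fun α hα => ?_⟩
  obtain ⟨hα_pos, hd, hq⟩ := hnear α hα
  exact scaled_costs_lt_costs ht₁ ht hc₁ hα_pos hα.2 hd hq

/-- Cost comparison: slowing down the high-effort segment and speeding up the low-effort
segment strictly reduces the total cost, for `α ∈ (0,1)` sufficiently close to `1`.
Here `β` is defined via `β − 1 = (1−α)(t₂−t₁)/(t₁−(1−α)t₂)`, `‖u‖²_R = u ⬝ᵥ R.mulVec u`, and
`N` is the additional (norm) term in the stage cost. -/
theorem stmt_10 {m : ℕ} (t₁ t₂ c₁ c₂ : ℝ) (ht₁ : 0 < t₁) (ht : t₁ < t₂)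
    (hc₁ : 0 < c₁) (hc₂ : 0 ≤ c₂)
    (R : Matrix (Fin m) (Fin m) ℝ) (hR : R.PosDef)
    (N : (Fin m → ℝ) → ℝ)
    (u₁ u₂ : Fin m → ℝ)
    (hu : u₁ ⬝ᵥ R.mulVec u₁ < u₂ ⬝ᵥ R.mulVec u₂) :
    ∃ α₀ ∈ Set.Ioo (0 : ℝ) 1, ∀ α ∈ Set.Ioo α₀ 1,
      (t₁ / (1 + (1 - α) * (t₂ - t₁) / (t₁ - (1 - α) * t₂))) *
          ((1 + (1 - α) * (t₂ - t₁) / (t₁ - (1 - α) * t₂)) ^ 2 * c₁ * (u₁ ⬝ᵥ R.mulVec u₁) +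
            (1 + (1 - α) * (t₂ - t₁) / (t₁ - (1 - α) * t₂)) * c₂ * N u₁) +
        ((t₂ - t₁) / α) * (α ^ 2 * c₁ * (u₂ ⬝ᵥ R.mulVec u₂) + α * c₂ * N u₂) <
      t₁ * (c₁ * (u₁ ⬝ᵥ R.mulVec u₁) + c₂ * N u₁) +
        (t₂ - t₁) * (c₁ * (u₂ ⬝ᵥ R.mulVec u₂) + c₂ * N u₂) :=
  stmt_10_general t₁ t₂ c₁ c₂ ht₁ ht hc₁ R N u₁ u₂ hu
end

section
/- For the mobile robot ẋ₁ = u₁cos x₃, ẋ₂ = u₁sin x₃, ẋ₃ = u₂ with available constant control values (0,0), (ū₁,0), (0,ū₂) with ū₁ > 0, ū₂ > 0: for every initial state x̂ ∈ ℝ³ there exist a time T > 0 and a piecewise-constant control u: [0,T] → {(0,0),(ū₁,0),(0,ū₂)} with at most three pieces (turn–move–turn) such that the resulting solution satisfies x(T) = (0,0,0). -/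
open Real Set Filter Topology

/-!
Turn on the spot until the heading points from `(x̂₁, x̂₂)` to the origin, drive straight for
the distance `‖(x̂₁, x̂₂)‖`, then turn on the spot until the heading is a multiple of `2π`.
Headings only matter modulo `2π` and `ū₂ > 0`, so each turn takes a duration in `(0, 2π / ū₂]`;
the last turn being strictly positive makes `T > 0` even when `x̂ = 0`.
-/

/-- The time spent in `[a, b]` up to time `t`. -/
def dwell (a b t : ℝ) : ℝ := min (max t a) b - a

section Dwell

variable {a b t : ℝ}

@[fun_prop]
theorem continuous_dwell : Continuous (dwell a b) := by
  unfold dwell; fun_prop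

theorem dwell_of_le (hab : a ≤ b) (ht : t ≤ a) : dwell a b t = 0 := by
  simp [dwell, max_eq_right ht, min_eq_left hab]

theorem dwell_of_ge (hab : a ≤ b) (ht : b ≤ t) : dwell a b t = b - a := by
  simp [dwell, max_eq_left (hab.trans ht), min_eq_right ht]

theorem hasDerivAt_dwell_of_lt (ht : t < a) : HasDerivAt (dwell a b) 0 t := by
  refine (hasDerivAt_const t (min a b - a)).congr_of_eventuallyEq ?_
  filter_upwards [eventually_lt_nhds ht] with s hs
  simp [dwell, max_eq_right hs.le]

theorem hasDerivAt_dwell_of_gt (ht : b < t) : HasDerivAt (dwell a b) 0 t := by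
  refine (hasDerivAt_const t (b - a)).congr_of_eventuallyEq ?_
  filter_upwards [eventually_gt_nhds ht] with s hs
  simp [dwell, min_eq_right (hs.le.trans (le_max_left s a))]

theorem hasDerivAt_dwell_of_mem_Ioo (ht : t ∈ Ioo a b) : HasDerivAt (dwell a b) 1 t := by
  refine ((hasDerivAt_id t).sub_const a).congr_of_eventuallyEq ?_
  filter_upwards [Ioo_mem_nhds ht.1 ht.2] with s hs
  simp [dwell, max_eq_left hs.1.le, min_eq_left hs.2.le]

end Dwell

theorem exists_polar (x y : ℝ) : ∃ r ≥ 0, ∃ φ, r * cos φ = x ∧ r * sin φ = y :=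
  ⟨‖(⟨x, y⟩ : ℂ)‖, norm_nonneg _, Complex.arg ⟨x, y⟩,
    Complex.norm_mul_cos_arg _, Complex.norm_mul_sin_arg _⟩

theorem exists_pos_turn {ω : ℝ} (hω : 0 < ω) (α β : ℝ) :
    ∃ τ > 0, ∃ k : ℤ, α + ω * τ = β + k * (2 * π) := by
  refine ⟨toIocMod two_pi_pos 0 (β - α) / ω,
    div_pos (toIocMod_mem_Ioc two_pi_pos 0 (β - α)).1 hω,
    -toIocDiv two_pi_pos 0 (β - α), ?_⟩
  have h := toIocMod_sub_self_eq_mul two_pi_pos 0 (β - α)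
  rw [mul_div_cancel₀ _ hω.ne']
  push_cast
  linarith

namespace TurnMoveTurn

variable (ub₁ ub₂ x₁₀ x₂₀ x₃₀ s₁ s₂ T : ℝ)

noncomputable def control (t : ℝ) : ℝ × ℝ :=
  if t < s₁ then (0, ub₂) else if t < s₂ then (ub₁, 0) else (0, ub₂)

noncomputable def heading (t : ℝ) : ℝ := x₃₀ + ub₂ * (dwell 0 s₁ t + dwell s₂ T t)

noncomputable def posX (t : ℝ) : ℝ := x₁₀ + ub₁ * cos (x₃₀ + ub₂ * s₁) * dwell s₁ s₂ t

noncomputable def posY (t : ℝ) : ℝ := x₂₀ + ub₁ * sin (x₃₀ + ub₂ * s₁) * dwell s₁ s₂ t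

theorem control_mem (t : ℝ) :
    control ub₁ ub₂ s₁ s₂ t ∈ ({((0 : ℝ), (0 : ℝ)), (ub₁, 0), (0, ub₂)} : Set (ℝ × ℝ)) := by
  unfold control; split_ifs <;> simp

@[fun_prop]
theorem continuous_heading : Continuous (heading ub₂ x₃₀ s₁ s₂ T) := by
  unfold heading; fun_prop

@[fun_prop]
theorem continuous_posX : Continuous (posX ub₁ ub₂ x₁₀ x₃₀ s₁ s₂) := by
  unfold posX; fun_prop

@[fun_prop]
theorem continuous_posY : Continuous (posY ub₁ ub₂ x₂₀ x₃₀ s₁ s₂) := by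
  unfold posY; fun_prop

variable {ub₁ ub₂ x₁₀ x₂₀ x₃₀ s₁ s₂ T}

theorem hasDerivAt (h₁ : 0 ≤ s₁) (h₁₂ : s₁ ≤ s₂) (h₂ : s₂ ≤ T) {t : ℝ} (ht : t ∈ Ioo 0 T)
    (ht₁ : t ≠ s₁) (ht₂ : t ≠ s₂) :
    HasDerivAt (posX ub₁ ub₂ x₁₀ x₃₀ s₁ s₂)
        ((control ub₁ ub₂ s₁ s₂ t).1 * cos (heading ub₂ x₃₀ s₁ s₂ T t)) t ∧
      HasDerivAt (posY ub₁ ub₂ x₂₀ x₃₀ s₁ s₂)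
        ((control ub₁ ub₂ s₁ s₂ t).1 * sin (heading ub₂ x₃₀ s₁ s₂ T t)) t ∧
      HasDerivAt (heading ub₂ x₃₀ s₁ s₂ T) (control ub₁ ub₂ s₁ s₂ t).2 t := by
  have hmove (d₁ d₂ d₃ : ℝ) (hd₁ : HasDerivAt (dwell 0 s₁) d₁ t)
      (hd₂ : HasDerivAt (dwell s₂ T) d₂ t) (hd₃ : HasDerivAt (dwell s₁ s₂) d₃ t) :
      HasDerivAt (posX ub₁ ub₂ x₁₀ x₃₀ s₁ s₂) (ub₁ * cos (x₃₀ + ub₂ * s₁) * d₃) t ∧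
        HasDerivAt (posY ub₁ ub₂ x₂₀ x₃₀ s₁ s₂) (ub₁ * sin (x₃₀ + ub₂ * s₁) * d₃) t ∧
        HasDerivAt (heading ub₂ x₃₀ s₁ s₂ T) (ub₂ * (d₁ + d₂)) t :=
    ⟨(hd₃.const_mul _).const_add x₁₀, (hd₃.const_mul _).const_add x₂₀,
      ((hd₁.add hd₂).const_mul ub₂).const_add x₃₀⟩
  rcases ht₁.lt_or_gt with hlt₁ | hgt₁
  · simpa [control, hlt₁] using hmove 1 0 0 (hasDerivAt_dwell_of_mem_Ioo ⟨ht.1, hlt₁⟩)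
      (hasDerivAt_dwell_of_lt (hlt₁.trans_le h₁₂)) (hasDerivAt_dwell_of_lt hlt₁)
  rcases ht₂.lt_or_gt with hlt₂ | hgt₂
  · -- during the move the heading is frozen at its value at `s₁`
    simpa [control, heading, hgt₁.not_gt, hlt₂, dwell_of_ge h₁ hgt₁.le,
      dwell_of_le h₂ hlt₂.le] using hmove 0 0 1 (hasDerivAt_dwell_of_gt hgt₁)
      (hasDerivAt_dwell_of_lt hlt₂) (hasDerivAt_dwell_of_mem_Ioo ⟨hgt₁, hlt₂⟩)
  · simpa [control, (h₁₂.trans_lt hgt₂).not_gt, hgt₂.not_gt] using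
      hmove 0 1 0 (hasDerivAt_dwell_of_gt (h₁₂.trans_lt hgt₂))
        (hasDerivAt_dwell_of_mem_Ioo ⟨hgt₂, ht.2⟩) (hasDerivAt_dwell_of_gt hgt₂)

end TurnMoveTurn

/-- Turn–move–turn controllability of the mobile robot: from any initial state there is a
piecewise-constant control with at most three pieces, taking values in
`{(0,0), (ū₁,0), (0,ū₂)}`, steering the system to the origin (the heading angle being taken
modulo `2π`, i.e. `x₃(T) = 2πk` for some integer `k`). -/
theorem stmt_19 (ub₁ ub₂ : ℝ) (hub₁ : 0 < ub₁) (hub₂ : 0 < ub₂) (xh₁ xh₂ xh₃ : ℝ) :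
    ∃ (T : ℝ), 0 < T ∧
    ∃ (s₁ s₂ : ℝ), 0 ≤ s₁ ∧ s₁ ≤ s₂ ∧ s₂ ≤ T ∧
    ∃ (u : ℝ → ℝ × ℝ) (x₁ x₂ x₃ : ℝ → ℝ),
      (∀ t, u t ∈ ({((0 : ℝ), (0 : ℝ)), (ub₁, 0), (0, ub₂)} : Set (ℝ × ℝ))) ∧
      (∀ t ∈ Set.Ico (0 : ℝ) s₁, u t = (0, ub₂)) ∧
      (∀ t ∈ Set.Ico s₁ s₂, u t = (ub₁, 0)) ∧
      (∀ t ∈ Set.Icc s₂ T, u t = (0, ub₂)) ∧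
      Continuous x₁ ∧ Continuous x₂ ∧ Continuous x₃ ∧
      (∀ t ∈ Set.Ioo (0 : ℝ) T, t ≠ s₁ → t ≠ s₂ →
        HasDerivAt x₁ ((u t).1 * Real.cos (x₃ t)) t ∧
        HasDerivAt x₂ ((u t).1 * Real.sin (x₃ t)) t ∧
        HasDerivAt x₃ ((u t).2) t) ∧
      x₁ 0 = xh₁ ∧ x₂ 0 = xh₂ ∧ x₃ 0 = xh₃ ∧
      x₁ T = 0 ∧ x₂ T = 0 ∧ (∃ k : ℤ, x₃ T = 2 * π * k) := by
  obtain ⟨r, hr, φ, hrx, hry⟩ := exists_polar (-xh₁) (-xh₂)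
  obtain ⟨s₁, hs₁, k₁, hk₁⟩ := exists_pos_turn hub₂ xh₃ φ
  obtain ⟨τ₃, hτ₃, k₃, hk₃⟩ := exists_pos_turn hub₂ (xh₃ + ub₂ * s₁) 0
  set s₂ := s₁ + r / ub₁
  have hs₁₂ : s₁ ≤ s₂ := le_add_of_nonneg_right (by positivity)
  have hs₂T : s₂ ≤ s₂ + τ₃ := le_add_of_nonneg_right hτ₃.le
  have hmove : ub₁ * (s₂ - s₁) = r := by simp only [s₂]; field_simp; ring
  refine ⟨s₂ + τ₃, by positivity, s₁, s₂, hs₁.le, hs₁₂, hs₂T,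
    TurnMoveTurn.control ub₁ ub₂ s₁ s₂, TurnMoveTurn.posX ub₁ ub₂ xh₁ xh₃ s₁ s₂,
    TurnMoveTurn.posY ub₁ ub₂ xh₂ xh₃ s₁ s₂, TurnMoveTurn.heading ub₂ xh₃ s₁ s₂ (s₂ + τ₃),
    TurnMoveTurn.control_mem ub₁ ub₂ s₁ s₂, ?_, ?_, ?_, by fun_prop, by fun_prop, by fun_prop,
    fun t ht => TurnMoveTurn.hasDerivAt hs₁.le hs₁₂ hs₂T ht, ?_, ?_, ?_, ?_, ?_, ⟨k₃, ?_⟩⟩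
  · intro t ht; simp [TurnMoveTurn.control, ht.2]
  · intro t ht; simp [TurnMoveTurn.control, ht.1.not_gt, ht.2]
  · intro t ht; simp [TurnMoveTurn.control, (hs₁₂.trans ht.1).not_gt, ht.1.not_gt]
  · simp [TurnMoveTurn.posX, dwell_of_le hs₁₂ hs₁.le]
  · simp [TurnMoveTurn.posY, dwell_of_le hs₁₂ hs₁.le]
  · simp [TurnMoveTurn.heading, dwell_of_le hs₁.le le_rfl, dwell_of_le hs₂T (hs₁.le.trans hs₁₂)]
  · rw [TurnMoveTurn.posX, dwell_of_ge hs₁₂ hs₂T, hk₁, cos_add_int_mul_two_pi]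
    linear_combination cos φ * hmove + hrx
  · rw [TurnMoveTurn.posY, dwell_of_ge hs₁₂ hs₂T, hk₁, sin_add_int_mul_two_pi]
    linear_combination sin φ * hmove + hry
  · rw [TurnMoveTurn.heading, dwell_of_ge hs₁.le (hs₁₂.trans hs₂T), dwell_of_ge hs₂T le_rfl]
    linear_combination hk₃
end
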